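/- Let f : V → ℕ be TTL values on n nodes at time t, updated each round by f'(v) = max(0, (max over the closed neighborhood of v in the connected graph G_t of f) − 1), where additionally at every time at least one node w has f(w) = m (a source refreshing to the maximum m, with m ≥ n). Then after at most n − 1 rounds, every node v satisfies f(v) ≥ m − (n − 1) ≥ 1; i.e., no node's TTL ever reaches 0. -/

import Mathlib

/-!
Call a node `k`-informed at time `t + k` when its value is at least `m - k`. The source makes
at least one node `0`-informed, and every node in the closed neighborhood of a `k`-informed node
becomes `(k + 1)`-informed in the next round. Since the snapshot is connected, a proper nonempty
set of nodes has a neighbor outside it, so the informed set gains a node every round until it is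
everything; after `n - 1` rounds all nodes carry at least `m - (n - 1) ≥ 1`.
-/

open Finset

namespace SimpleGraph

variable {V : Type*} [Fintype V] [DecidableEq V] (G : SimpleGraph V) [DecidableRel G.Adj]

def closedNbhdFinset (S : Finset V) : Finset V :=
  {v | v ∈ S ∨ ∃ u ∈ S, G.Adj v u}

theorem subset_closedNbhdFinset (S : Finset V) : S ⊆ G.closedNbhdFinset S := fun v hv ↦ by
  simp [closedNbhdFinset, hv]

variable {G}

theorem Connected.min_card_succ_le_card_closedNbhdFinset (hG : G.Connected) {S : Finset V}
    (hS : S.Nonempty) :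
    min (#S + 1) (Fintype.card V) ≤ #(G.closedNbhdFinset S) := by
  by_cases huniv : S = univ
  · have : G.closedNbhdFinset S = univ :=
      univ_subset_iff.mp (huniv ▸ G.subset_closedNbhdFinset S)
    simp [this]
  obtain ⟨u, hu⟩ := hS
  obtain ⟨w, hw⟩ := not_forall.mp (mt eq_univ_iff_forall.mpr huniv)
  obtain ⟨d, -, hdS, hdnS⟩ := (hG.preconnected u w).some.exists_boundary_dart (↑S) hu hw
  have hsub : insert d.snd S ⊆ G.closedNbhdFinset S := by
    refine insert_subset ?_ (G.subset_closedNbhdFinset S)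
    simpa [closedNbhdFinset] using Or.inr ⟨d.fst, hdS, d.adj.symm⟩
  calc min (#S + 1) (Fintype.card V) ≤ #S + 1 := min_le_left _ _
    _ = #(insert d.snd S) := (card_insert_of_notMem hdnS).symm
    _ ≤ _ := card_le_card hsub

end SimpleGraph

theorem closedNbhdFinset_superlevel_subset_of_ttl_update {V : Type*} [Fintype V] [DecidableEq V]
    {G : SimpleGraph V} [DecidableRel G.Adj] {g g' : V → ℕ} {m a : ℕ}
    (hupd : ∀ v, g' v = m ∨ g' v = ((G.neighborFinset v).sup g ⊔ g v) - 1) (ha : a ≤ m) :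
    G.closedNbhdFinset {u | a ≤ g u} ⊆ ({v | a - 1 ≤ g' v} : Finset V) := by
  intro v hv
  simp only [SimpleGraph.closedNbhdFinset, mem_filter, mem_univ, true_and] at hv ⊢
  rcases hupd v with h | h
  · omega
  have hmax : a ≤ (G.neighborFinset v).sup g ⊔ g v := by
    rcases hv with hv | ⟨u, hu, hadj⟩
    · exact le_sup_of_le_right hv
    · exact le_sup_of_le_left (le_sup_of_le ((G.mem_neighborFinset v u).mpr hadj) hu)
  omega

theorem min_succ_le_card_ttl_superlevel {V : Type*} [Fintype V] [DecidableEq V]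
    (G : ℕ → SimpleGraph V) [∀ t, DecidableRel (G t).Adj] (hconn : ∀ t, (G t).Connected)
    (m : ℕ) (f : ℕ → V → ℕ) (hsrc : ∀ t, ∃ w, f t w = m)
    (hupd : ∀ t v,
      f (t + 1) v = m ∨ f (t + 1) v = (((G t).neighborFinset v).sup (f t) ⊔ f t v) - 1)
    (k t : ℕ) : min (k + 1) (Fintype.card V) ≤ #{v | m - k ≤ f (t + k) v} := by
  induction k with
  | zero =>
    obtain ⟨w, hw⟩ := hsrc t
    have : 0 < #{v | m - 0 ≤ f (t + 0) v} := card_pos.mpr ⟨w, by simp [hw]⟩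
    omega
  | succ k ih =>
    obtain ⟨w, hw⟩ := hsrc (t + k)
    have hne : ({v | m - k ≤ f (t + k) v} : Finset V).Nonempty := ⟨w, by simp [hw]⟩
    have hgrow := (hconn (t + k)).min_card_succ_le_card_closedNbhdFinset hne
    have hsub := closedNbhdFinset_superlevel_subset_of_ttl_update (hupd (t + k)) (Nat.sub_le m k)
    rw [Nat.sub_sub, add_assoc] at hsub
    have := card_le_card hsub
    omega

theorem stmt_15_general {V : Type*} [Fintype V] (n : ℕ)
    (hn : Fintype.card V = n)
    (G : ℕ → SimpleGraph V) [∀ t, DecidableRel (G t).Adj]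
    (hconn : ∀ t, (G t).Connected)
    (m : ℕ) (hm : n ≤ m)
    (f : ℕ → V → ℕ)
    (hsrc : ∀ t : ℕ, ∃ w : V, f t w = m)
    (hupd : ∀ (t : ℕ) (v : V),
      f (t + 1) v = m ∨
      f (t + 1) v = (((G t).neighborFinset v).sup (f t) ⊔ f t v) - 1) :
    1 ≤ m - (n - 1) ∧
      ∀ t : ℕ, n - 1 ≤ t → ∀ v : V, m - (n - 1) ≤ f t v ∧ 1 ≤ f t v := by
  classical
  have hn1 : 1 ≤ n := hn ▸ Fintype.card_pos_iff.mpr ⟨(hsrc 0).choose⟩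
  refine ⟨by omega, fun t ht v ↦ ?_⟩
  have hcard := min_succ_le_card_ttl_superlevel G hconn m f hsrc hupd (n - 1) (t - (n - 1))
  rw [hn, Nat.sub_add_cancel ht, Nat.sub_add_cancel hn1, min_self] at hcard
  have hall := eq_univ_of_card _ (le_antisymm (card_le_univ _) (by rwa [hn]))
  have hv : v ∈ ({v | m - (n - 1) ≤ f t v} : Finset V) := by
    rw [hall]; exact mem_univ v
  simp only [mem_filter, mem_univ, true_and] at hv
  omega

/-- In a dynamic network whose every snapshot is connected, if TTL
values are updated each round to (the maximum of the previous values over the closed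
neighborhood) minus one — except that at every time some source node holds the
maximum value `m ≥ n` — then after at most `n − 1` rounds every node's value is at
least `m − (n − 1) ≥ 1`; in particular no node's TTL ever reaches 0 from then on. -/
theorem stmt_15 {V : Type*} [Fintype V] [DecidableEq V] (n : ℕ)
    (hn : Fintype.card V = n) (hn1 : 1 ≤ n)
    (G : ℕ → SimpleGraph V) [∀ t, DecidableRel (G t).Adj]
    (hconn : ∀ t, (G t).Connected)
    (m : ℕ) (hm : n ≤ m)
    (f : ℕ → V → ℕ)
    (hle : ∀ (t : ℕ) (v : V), f t v ≤ m)
    (hsrc : ∀ t : ℕ, ∃ w : V, f t w = m)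
    (hupd : ∀ (t : ℕ) (v : V),
      f (t + 1) v = m ∨
      f (t + 1) v = (((G t).neighborFinset v).sup (f t) ⊔ f t v) - 1) :
    1 ≤ m - (n - 1) ∧
      ∀ t : ℕ, n - 1 ≤ t → ∀ v : V, m - (n - 1) ≤ f t v ∧ 1 ≤ f t v :=
  stmt_15_general n hn G hconn m hm f hsrc hupd
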